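/- arXiv:1612.01845 — 4 statements merged into one kernel-verified Lean document; each statement's English description precedes it below -/
import Mathlib

section
/- For fixed ρ > 0, the Erlang blocking probability B(m, ρ) = (ρ^m/m!)/(Σ_{i=0}^m ρ^i/i!) is strictly decreasing in m: B(m+1, ρ) < B(m, ρ) for all m ≥ 0. -/
/-!
With `a i = ρ ^ i / i!`, the ratios `a (i + 1) / a i = ρ / (i + 1)` decrease in `i`. Hence
`a (m + 1) * a i ≤ a m * a (i + 1)` for `i ≤ m`, and summing over `i ≤ m` gives
`a (m + 1) * S m ≤ a m * (S (m + 1) - a 0) < a m * S (m + 1)` for the partial sums `S`.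
-/

open Finset Nat

-- `hratio` is `a (m + 1) / a m ≤ a (i + 1) / a i`, cross-multiplied.
theorem div_sum_range_succ_lt {a : ℕ → ℝ} {m : ℕ} (hpos : ∀ i, 0 < a i)
    (hratio : ∀ i ≤ m, a (m + 1) * a i ≤ a m * a (i + 1)) :
    a (m + 1) / ∑ i ∈ range (m + 2), a i < a m / ∑ i ∈ range (m + 1), a i := by
  have hsum : ∀ n, 0 < ∑ i ∈ range (n + 1), a i := fun n =>
    sum_pos (fun i _ => hpos i) nonempty_range_add_one
  rw [div_lt_div_iff₀ (hsum _) (hsum _), mul_sum, mul_sum, sum_range_succ' _ (m + 1)]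
  calc ∑ i ∈ range (m + 1), a (m + 1) * a i
      ≤ ∑ i ∈ range (m + 1), a m * a (i + 1) :=
        sum_le_sum fun i hi => hratio i (Nat.lt_succ_iff.mp (mem_range.mp hi))
    _ < ∑ i ∈ range (m + 1), a m * a (i + 1) + a m * a 0 :=
        lt_add_of_pos_right _ (mul_pos (hpos m) (hpos 0))

theorem pow_succ_div_factorial_succ (ρ : ℝ) (n : ℕ) :
    ρ ^ (n + 1) / ((n + 1)! : ℝ) = ρ ^ n / (n ! : ℝ) * (ρ / (n + 1)) := by
  rw [Nat.factorial_succ, Nat.cast_mul, pow_succ, mul_comm ((n + 1 : ℕ) : ℝ), mul_div_mul_comm,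
    Nat.cast_succ]

theorem pow_div_factorial_ratio_antitone {ρ : ℝ} (hρ : 0 ≤ ρ) {i m : ℕ} (him : i ≤ m) :
    ρ ^ (m + 1) / ((m + 1)! : ℝ) * (ρ ^ i / (i ! : ℝ)) ≤
      ρ ^ m / (m ! : ℝ) * (ρ ^ (i + 1) / ((i + 1)! : ℝ)) := by
  rw [pow_succ_div_factorial_succ, pow_succ_div_factorial_succ, mul_right_comm, mul_assoc]
  gcongr

/-- For fixed ρ > 0, the Erlang blocking probability is strictly decreasing in m. -/
theorem erlangB_strict_anti (ρ : ℝ) (hρ : 0 < ρ)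
    (B : ℕ → ℝ)
    (hB : ∀ n, B n = (ρ ^ n / (Nat.factorial n : ℝ)) /
      ∑ i ∈ Finset.range (n + 1), ρ ^ i / (Nat.factorial i : ℝ)) :
    ∀ m : ℕ, B (m + 1) < B m := by
  intro m
  rw [hB, hB]
  exact div_sum_range_succ_lt (a := fun i => ρ ^ i / (i ! : ℝ)) (fun i => by positivity)
    fun i him => pow_div_factorial_ratio_antitone hρ.le him
end

section
/- Let Q be an irreducible generator matrix of an n-state continuous-time Markov chain with stationary row vector π (πQ = 0, π·1 = 1). Then the matrix 1π − Q is invertible, where 1 is the column vector of ones. -/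
open Matrix

/-- A generator matrix is irreducible if every state can reach every other state
through transitions of positive rate. -/
def GeneratorIrreducible {n : ℕ} (Q : Matrix (Fin n) (Fin n) ℝ) : Prop :=
  ∀ i j : Fin n, Relation.ReflTransGen (fun a b => 0 < Q a b) i j

/-- For an irreducible generator Q with stationary row vector π, the matrix
1π − Q is invertible (1π is the matrix whose every row is π). -/
theorem onePi_sub_gen_invertible {n : ℕ} (hn : 1 ≤ n)
    (Q : Matrix (Fin n) (Fin n) ℝ)
    (hoff : ∀ i j, i ≠ j → 0 ≤ Q i j)
    (hrow : ∀ i, ∑ j, Q i j = 0)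
    (hirr : GeneratorIrreducible Q)
    (π : Fin n → ℝ)
    (hπpos : ∀ i, 0 ≤ π i) (hπsum : ∑ i, π i = 1)
    (hstat : Matrix.vecMul π Q = 0) :
    IsUnit ((Matrix.of fun _ j => π j) - Q) := by
  have hne : Nonempty (Fin n) := ⟨⟨0, hn⟩⟩
  rw [Matrix.isUnit_iff_isUnit_det, isUnit_iff_ne_zero]
  intro hdet
  obtain ⟨v, hv0, hv⟩ := (Matrix.exists_mulVec_eq_zero_iff).2 hdet
  set c := ∑ j, π j * v j with hc
  have hQv : ∀ i, Q.mulVec v i = c := by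
    intro i
    have h := congrFun hv i
    have : (∑ j, (π j - Q i j) * v j) = 0 := by
      simpa [Matrix.mulVec, dotProduct, Matrix.sub_apply] using h
    have h2 : c - Q.mulVec v i = 0 := by
      rw [hc]
      simpa [sub_mul, Finset.sum_sub_distrib, Matrix.mulVec, dotProduct]
        using this
    linarith
  have hc0 : c = 0 := by
    have h1 : π ⬝ᵥ Q.mulVec v = 0 := by
      rw [Matrix.dotProduct_mulVec, hstat]
      simp [dotProduct]
    have h2 : π ⬝ᵥ Q.mulVec v = c := by
      simp only [dotProduct]
      calc ∑ i, π i * Q.mulVec v i = ∑ i, π i * c := by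
            refine Finset.sum_congr rfl fun i _ => by rw [hQv i]
        _ = (∑ i, π i) * c := by rw [Finset.sum_mul]
        _ = c := by rw [hπsum, one_mul]
    linarith
  have hQ0 : ∀ i, Q.mulVec v i = 0 := fun i => by rw [hQv i, hc0]
  obtain ⟨i₀, -, hmax⟩ := Finset.exists_max_image Finset.univ v ⟨Classical.arbitrary _, Finset.mem_univ _⟩
  have hconst : ∀ j, v j = v i₀ := by
    intro j
    induction hirr i₀ j with
    | refl => rfl
    | tail _ hstep ih =>
      rename_i b k _
      -- v b = v i₀, 0 < Q b k, show v k = v i₀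
      have hsum0 : ∑ l, Q b l * (v l - v b) = 0 := by
        have e1 : ∑ l, Q b l * v l = 0 := by
          simpa [Matrix.mulVec, dotProduct] using hQ0 b
        have e2 : ∑ l, Q b l * v b = 0 := by
          rw [← Finset.sum_mul, hrow b, zero_mul]
        calc ∑ l, Q b l * (v l - v b)
            = ∑ l, (Q b l * v l - Q b l * v b) := by
              refine Finset.sum_congr rfl fun l _ => by ring
          _ = 0 := by rw [Finset.sum_sub_distrib, e1, e2, sub_zero]
      have hnonpos : ∀ l ∈ Finset.univ, Q b l * (v l - v b) ≤ 0 := by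
        intro l _
        rcases eq_or_ne l b with rfl | hlb
        · simp
        · have h1 : 0 ≤ Q b l := hoff b l (Ne.symm hlb)
          have h2 : v l - v b ≤ 0 := by
            have := hmax l (Finset.mem_univ l)
            rw [ih] at *
            linarith
          exact mul_nonpos_of_nonneg_of_nonpos h1 h2
      have hzero := (Finset.sum_eq_zero_iff_of_nonpos hnonpos).1 hsum0 k (Finset.mem_univ k)
      have : v k - v b = 0 := by
        rcases mul_eq_zero.1 hzero with h | h
        · exact absurd h (ne_of_gt hstep)
        · exact h
      have : v k = v b := by linarith
      rw [this, ih]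
  have hvi0 : v i₀ = 0 := by
    have : c = v i₀ := by
      rw [hc]
      calc ∑ j, π j * v j = ∑ j, π j * v i₀ := by
            refine Finset.sum_congr rfl fun j _ => by rw [hconst j]
        _ = (∑ j, π j) * v i₀ := by rw [Finset.sum_mul]
        _ = v i₀ := by rw [hπsum, one_mul]
    linarith
  exact hv0 (funext fun j => by rw [hconst j, hvi0]; rfl)
end

section
/- Let Q be an irreducible n×n generator with stationary row vector π and let D⁻ = (1π − Q)⁻¹. Then for every t ≥ 0, ∫₀ᵗ exp(Qs) ds = 1π·t + (I − exp(Qt))·(D⁻ − 1π). -/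
/-!
With `P = 1π` and `C = D⁻ - 1π` one has `Q C = P - 1` (because `P D⁻ = P`) and `e^{sQ} P = P`
(because `Q P = 0`), so `F s = s • P + (1 - e^{sQ}) C` has derivative
`P + e^{sQ} (1 - P) = e^{sQ}`.
As `F 0 = 0`, the identity is the fundamental theorem of calculus for `F`.
-/

open Matrix MeasureTheory

attribute [local instance] Matrix.linftyOpNormedRing Matrix.linftyOpNormedAlgebra

open NormedSpace

theorem mul_sub_eq_sub_one_of_mul_eq_one {R : Type*} [Ring R] {P Q D : R}
    (hPQ : P * Q = 0) (hQP : Q * P = 0) (hP : IsIdempotentElem P) (hD : (P - Q) * D = 1) :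
    Q * (D - P) = P - 1 := by
  have hPD : P * D = P := by
    calc P * D = P * (P - Q) * D := by rw [mul_sub, hP.eq, hPQ, sub_zero]
      _ = P := by rw [mul_assoc, hD, mul_one]
  calc Q * (D - P) = (P - (P - Q)) * D - Q * P := by rw [sub_sub_cancel, mul_sub]
    _ = P - 1 := by rw [sub_mul, hPD, hD, hQP, sub_zero]

section

variable {𝔸 : Type*} [NormedRing 𝔸] [NormedAlgebra ℝ 𝔸] [CompleteSpace 𝔸]

theorem NormedSpace.exp_mul_of_mul_eq_zero {x y : 𝔸} (h : x * y = 0) : exp x * y = y := by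
  have hterm : ∀ n ≠ 0, ((n.factorial⁻¹ : ℝ) • x ^ n) * y = 0 := by
    intro n hn
    obtain ⟨m, rfl⟩ := Nat.exists_eq_succ_of_ne_zero hn
    rw [smul_mul_assoc, pow_succ, mul_assoc, h, mul_zero, smul_zero]
  exact ((exp_series_hasSum_exp' (𝕂 := ℝ) x).mul_right y).unique
    (by simpa using hasSum_single 0 hterm)

theorem hasDerivAt_smul_add_one_sub_exp_smul_mul {P Q C : 𝔸} (hQP : Q * P = 0)
    (hQC : Q * C = P - 1) (s : ℝ) :
    HasDerivAt (fun u : ℝ => u • P + (1 - exp (u • Q)) * C) (exp (s • Q)) s := by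
  refine (((hasDerivAt_id s).smul_const P).add
    (((hasDerivAt_exp_smul_const Q s).const_sub 1).mul_const C)).congr_deriv ?_
  have hexpP : exp (s • Q) * P = P :=
    exp_mul_of_mul_eq_zero (by rw [smul_mul_assoc, hQP, smul_zero])
  rw [one_smul, neg_mul, mul_assoc, hQC, mul_sub, hexpP, mul_one]
  abel

theorem intervalIntegral.integral_exp_smul_eq {P Q C : 𝔸} (hQP : Q * P = 0)
    (hQC : Q * C = P - 1) (t : ℝ) :
    ∫ s in (0 : ℝ)..t, exp (s • Q) = t • P + (1 - exp (t • Q)) * C := by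
  have hcont : Continuous fun s : ℝ => exp (s • Q) :=
    continuous_iff_continuousAt.2 fun s => (hasDerivAt_exp_smul_const Q s).continuousAt
  rw [intervalIntegral.integral_eq_sub_of_hasDerivAt
    (fun s _ => hasDerivAt_smul_add_one_sub_exp_smul_mul hQP hQC s) (hcont.intervalIntegrable 0 t)]
  simp

end

theorem integral_matrix_exp_general {n : ℕ}
    (Q : Matrix (Fin n) (Fin n) ℝ)
    (hrow : ∀ i, ∑ j, Q i j = 0)
    (π : Fin n → ℝ)
    (hπsum : ∑ i, π i = 1)
    (hstat : Matrix.vecMul π Q = 0)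
    (OnePi : Matrix (Fin n) (Fin n) ℝ) (hOnePi : OnePi = Matrix.of fun _ j => π j)
    (hunit : IsUnit (OnePi - Q)) :
    ∀ t : ℝ, 0 ≤ t →
      ∫ s in (0 : ℝ)..t, NormedSpace.exp (s • Q) =
        t • OnePi + (1 - NormedSpace.exp (t • Q)) * ((OnePi - Q)⁻¹ - OnePi) := by
  intro t _
  have hP : OnePi = vecMulVec 1 π := by
    rw [hOnePi]
    ext
    simp [vecMulVec]
  have hQP : Q * OnePi = 0 := by
    have hQ1 : Q *ᵥ 1 = 0 := funext fun i => by simpa [mulVec, dotProduct] using hrow i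
    rw [hP, mul_vecMulVec, hQ1, zero_vecMulVec]
  have hPQ : OnePi * Q = 0 := by
    rw [hP, vecMulVec_mul, hstat, vecMulVec_zero]
  have hPP : IsIdempotentElem OnePi := by
    rw [IsIdempotentElem, hP, vecMulVec_mul_vecMulVec, dotProduct_one, hπsum, one_smul]
  have hD : (OnePi - Q) * (OnePi - Q)⁻¹ = 1 :=
    mul_nonsing_inv _ ((isUnit_iff_isUnit_det _).mp hunit)
  exact intervalIntegral.integral_exp_smul_eq hQP
    (mul_sub_eq_sub_one_of_mul_eq_one hPQ hQP hPP hD) t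

/-- For an irreducible generator Q with stationary row vector π and
D⁻ = (1π − Q)⁻¹: for every t ≥ 0,
∫₀ᵗ exp(Qs) ds = 1π·t + (I − exp(Qt))·(D⁻ − 1π). -/
theorem integral_matrix_exp {n : ℕ} (hn : 1 ≤ n)
    (Q : Matrix (Fin n) (Fin n) ℝ)
    (hoff : ∀ i j, i ≠ j → 0 ≤ Q i j)
    (hrow : ∀ i, ∑ j, Q i j = 0)
    (hirr : GeneratorIrreducible Q)
    (π : Fin n → ℝ)
    (hπpos : ∀ i, 0 ≤ π i) (hπsum : ∑ i, π i = 1)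
    (hstat : Matrix.vecMul π Q = 0)
    (OnePi : Matrix (Fin n) (Fin n) ℝ) (hOnePi : OnePi = Matrix.of fun _ j => π j)
    (hunit : IsUnit (OnePi - Q)) :
    ∀ t : ℝ, 0 ≤ t →
      ∫ s in (0 : ℝ)..t, NormedSpace.exp (s • Q) =
        t • OnePi + (1 - NormedSpace.exp (t • Q)) * ((OnePi - Q)⁻¹ - OnePi) :=
  integral_matrix_exp_general Q hrow π hπsum hstat OnePi hOnePi hunit
end

section
/- Let Q be an irreducible n×n generator with stationary row vector π, D* an arbitrary n×n nonnegative cost-rate matrix, and π₀ an initial probability row vector. Then ∫₀ᵗ π₀ exp(Qs) D* 1 ds = π D* 1 · t − π₀ (exp(Qt) − I) D⁻ D* 1, where D⁻ = (1π − Q)⁻¹. -/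
open Matrix MeasureTheory

attribute [local instance] Matrix.linftyOpNormedRing Matrix.linftyOpNormedAlgebra

/-!
Since the rows of `Q` sum to zero, `Q * 1π = 0` and hence `exp (s Q) * 1π = 1π`. Stationarity
and `π 1 = 1` give `1π * Q = 0` and `1π * 1π = 1π`, so that `D⁻ = (1π - Q)⁻¹` satisfies
`1π * D⁻ = 1π` and `Q * D⁻ = 1π - 1`. Consequently `s • 1π - exp (s Q) * D⁻` has derivative
`exp (s Q)`, which evaluates the matrix integral `∫₀ᵗ exp (s Q) ds`; the reward integral is its
image under the continuous linear functional `M ↦ π₀ M D* 1`, and `π₀ * 1π = π`.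
-/

section BanachAlgebra

variable {𝔸 : Type*} [NormedRing 𝔸] [NormedAlgebra ℝ 𝔸] [CompleteSpace 𝔸]

theorem continuous_exp_smul_const (Q : 𝔸) : Continuous fun s : ℝ => NormedSpace.exp (s • Q) :=
  continuous_iff_continuousAt.2 fun s => (hasDerivAt_exp_smul_const Q s).continuousAt

theorem exp_smul_mul_eq_self_of_mul_eq_zero {Q P : 𝔸} (hQP : Q * P = 0) (t : ℝ) :
    NormedSpace.exp (t • Q) * P = P := by
  have hderiv : ∀ s : ℝ, HasDerivAt (fun u : ℝ => NormedSpace.exp (u • Q) * P) 0 s := fun s => by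
    simpa only [mul_assoc, hQP, mul_zero] using (hasDerivAt_exp_smul_const Q s).mul_const P
  simpa using is_const_of_deriv_eq_zero (fun s => (hderiv s).differentiableAt)
    (fun s => (hderiv s).deriv) t 0

/-- `P` plays the role of the ergodic projection `1π` and `D` that of `(1π - Q)⁻¹`. -/
theorem intervalIntegral_exp_smul_eq_of_projection {Q P D : 𝔸} (hQP : Q * P = 0)
    (hPQ : P * Q = 0) (hPP : P * P = P) (hD : (P - Q) * D = 1) (t : ℝ) :
    ∫ s in (0 : ℝ)..t, NormedSpace.exp (s • Q) = t • P - (NormedSpace.exp (t • Q) - 1) * D := by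
  have hPD : P * D = P := by
    calc P * D = P * (P - Q) * D := by rw [mul_sub, hPP, hPQ, sub_zero]
      _ = P := by rw [mul_assoc, hD, mul_one]
  have hQD : Q * D = P - 1 := by
    rw [← hPD, ← hD, sub_mul, sub_sub_cancel]
  have hderiv : ∀ s : ℝ, HasDerivAt (fun u : ℝ => u • P - NormedSpace.exp (u • Q) * D)
      (NormedSpace.exp (s • Q)) s := fun s => by
    refine ((hasDerivAt_id s).smul_const P).sub
      ((hasDerivAt_exp_smul_const Q s).mul_const D) |>.congr_deriv ?_
    rw [mul_assoc, hQD, mul_sub, exp_smul_mul_eq_self_of_mul_eq_zero hQP, one_smul, mul_one]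
    abel
  rw [intervalIntegral.integral_eq_sub_of_hasDerivAt (fun s _ => hderiv s)
    ((continuous_exp_smul_const Q).intervalIntegrable 0 t), zero_smul, zero_smul,
    NormedSpace.exp_zero, sub_mul, one_mul]
  abel

end BanachAlgebra

theorem Matrix.intervalIntegral_vecMul_mul_dotProduct {m : Type*} [Fintype m] [DecidableEq m]
    {f : ℝ → Matrix m m ℝ} (hf : Continuous f) (u w : m → ℝ) (N : Matrix m m ℝ) (a b : ℝ) :
    ∫ s in a..b, vecMul u (f s * N) ⬝ᵥ w = vecMul u ((∫ s in a..b, f s) * N) ⬝ᵥ w := by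
  let L : Matrix m m ℝ →ₗ[ℝ] ℝ :=
    { toFun := fun M => vecMul u (M * N) ⬝ᵥ w
      map_add' := fun M N => by simp only [add_mul, vecMul_add, add_dotProduct]
      map_smul' := fun r M => by
        simp only [smul_mul, vecMul_smul, smul_dotProduct, RingHom.id_apply] }
  exact L.toContinuousLinearMap.intervalIntegral_comp_comm (hf.intervalIntegrable a b)

theorem expected_accumulated_reward_general {n : ℕ}
    (Q : Matrix (Fin n) (Fin n) ℝ)
    (hrow : ∀ i, ∑ j, Q i j = 0)
    (π : Fin n → ℝ)
    (hπsum : ∑ i, π i = 1)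
    (hstat : Matrix.vecMul π Q = 0)
    (Dstar : Matrix (Fin n) (Fin n) ℝ)
    (π₀ : Fin n → ℝ) (hπ₀sum : ∑ i, π₀ i = 1)
    (OnePi : Matrix (Fin n) (Fin n) ℝ) (hOnePi : OnePi = Matrix.of fun _ j => π j)
    (hunit : IsUnit (OnePi - Q)) :
    ∀ t : ℝ, 0 ≤ t →
      ∫ s in (0 : ℝ)..t,
          Matrix.vecMul π₀ (NormedSpace.exp (s • Q) * Dstar) ⬝ᵥ (fun _ => 1) =
        (Matrix.vecMul π Dstar ⬝ᵥ (fun _ => 1)) * t -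
          Matrix.vecMul π₀ ((NormedSpace.exp (t • Q) - 1) * (OnePi - Q)⁻¹ * Dstar) ⬝ᵥ
            (fun _ => 1) := by
  intro t _
  have hQP : Q * OnePi = 0 := by
    ext i j
    simp [hOnePi, mul_apply, ← Finset.sum_mul, hrow]
  have hPQ : OnePi * Q = 0 := by
    ext i j
    simpa [hOnePi, mul_apply, vecMul, dotProduct] using congrFun hstat j
  have hPP : OnePi * OnePi = OnePi := by
    ext i j
    simp [hOnePi, mul_apply, ← Finset.sum_mul, hπsum]
  have hπ₀P : vecMul π₀ OnePi = π := by
    ext j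
    simp [hOnePi, vecMul, dotProduct, ← Finset.sum_mul, hπ₀sum]
  have hD := mul_nonsing_inv _ ((isUnit_iff_isUnit_det _).mp hunit)
  -- Restated so as to carry the statement's `Matrix` ring and topology instances, which the
  -- `NormedRing` lemmas only match up to unfolding.
  have hexp : Continuous fun s : ℝ => NormedSpace.exp (s • Q) := continuous_exp_smul_const Q
  have hint : ∫ s in (0 : ℝ)..t, NormedSpace.exp (s • Q) =
      t • OnePi - (NormedSpace.exp (t • Q) - 1) * (OnePi - Q)⁻¹ :=
    intervalIntegral_exp_smul_eq_of_projection hQP hPQ hPP hD t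
  rw [intervalIntegral_vecMul_mul_dotProduct hexp, hint, sub_mul, vecMul_sub, sub_dotProduct,
    smul_mul, vecMul_smul, ← vecMul_vecMul, hπ₀P, smul_dotProduct, smul_eq_mul, mul_comm]

/-- Expected accumulated reward of a Markov reward process: for an irreducible
generator Q with stationary π, nonnegative cost-rate matrix D*, and initial
distribution π₀,
∫₀ᵗ π₀ exp(Qs) D* 1 ds = π D* 1 · t − π₀ (exp(Qt) − I) D⁻ D* 1,
where D⁻ = (1π − Q)⁻¹. -/
theorem expected_accumulated_reward {n : ℕ} (hn : 1 ≤ n)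
    (Q : Matrix (Fin n) (Fin n) ℝ)
    (hoff : ∀ i j, i ≠ j → 0 ≤ Q i j)
    (hrow : ∀ i, ∑ j, Q i j = 0)
    (hirr : GeneratorIrreducible Q)
    (π : Fin n → ℝ)
    (hπpos : ∀ i, 0 ≤ π i) (hπsum : ∑ i, π i = 1)
    (hstat : Matrix.vecMul π Q = 0)
    (Dstar : Matrix (Fin n) (Fin n) ℝ) (hDstar : ∀ i j, 0 ≤ Dstar i j)
    (π₀ : Fin n → ℝ) (hπ₀pos : ∀ i, 0 ≤ π₀ i) (hπ₀sum : ∑ i, π₀ i = 1)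
    (OnePi : Matrix (Fin n) (Fin n) ℝ) (hOnePi : OnePi = Matrix.of fun _ j => π j)
    (hunit : IsUnit (OnePi - Q)) :
    ∀ t : ℝ, 0 ≤ t →
      ∫ s in (0 : ℝ)..t,
          Matrix.vecMul π₀ (NormedSpace.exp (s • Q) * Dstar) ⬝ᵥ (fun _ => 1) =
        (Matrix.vecMul π Dstar ⬝ᵥ (fun _ => 1)) * t -
          Matrix.vecMul π₀ ((NormedSpace.exp (t • Q) - 1) * (OnePi - Q)⁻¹ * Dstar) ⬝ᵥ
            (fun _ => 1) :=
  expected_accumulated_reward_general Q hrow π hπsum hstat Dstar π₀ hπ₀sum OnePi hOnePi hunit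
end
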